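/- Let p be a prime and let f : ℤ_p → ℤ_p be a compatible function. Then f is ergodic with respect to the normalized Haar measure μ_p on ℤ_p if and only if f is transitive modulo p^k for every k = 1, 2, 3, … -/

import Mathlib

open MeasureTheory Filter

/-- Borel measurable structure on the `p`-adic integers. -/
noncomputable instance padicMS (p : ℕ) [Fact p.Prime] : MeasurableSpace ℤ_[p] := borel _

instance padicBS (p : ℕ) [Fact p.Prime] : BorelSpace ℤ_[p] := ⟨rfl⟩

/-- The Haar measure `μ_p` on `ℤ_p`, normalized so that `μ_p(ℤ_p) = 1`. -/
noncomputable def padicHaar (p : ℕ) [Fact p.Prime] : Measure ℤ_[p] :=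
  Measure.addHaarMeasure (⊤ : TopologicalSpace.PositiveCompacts ℤ_[p])

/-- The map `f̄_k : ℤ/p^kℤ → ℤ/p^kℤ` induced by `f : ℤ_p → ℤ_p` via reduction
modulo `p^k` (well-defined whenever `f` is compatible, i.e. 1-Lipschitz). -/
noncomputable def modMap (p : ℕ) [Fact p.Prime] (f : ℤ_[p] → ℤ_[p]) (k : ℕ) :
    ZMod (p ^ k) → ZMod (p ^ k) :=
  fun z => PadicInt.toZModPow k (f ((z.val : ℕ) : ℤ_[p]))

/-- The map `F̄_k : (ℤ/p^kℤ)^n → (ℤ/p^kℤ)^m` induced by `F : ℤ_p^n → ℤ_p^m` via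
coordinatewise reduction modulo `p^k` (well-defined whenever `F` is compatible). -/
noncomputable def modMapV (p : ℕ) [Fact p.Prime] {n m : ℕ}
    (F : (Fin n → ℤ_[p]) → (Fin m → ℤ_[p])) (k : ℕ) :
    (Fin n → ZMod (p ^ k)) → (Fin m → ZMod (p ^ k)) :=
  fun v i => PadicInt.toZModPow k (F (fun j => ((v j).val : ℤ_[p])) i)

/-- The sphere `S_{p^{-r}}(y) = {z : ‖z - y‖ = p^{-r}}` in `ℤ_p`. -/
def padicSphere (p : ℕ) [Fact p.Prime] (y : ℤ_[p]) (r : ℕ) : Set ℤ_[p] :=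
  {z : ℤ_[p] | ‖z - y‖ = (p : ℝ) ^ (-(r : ℤ))}

/-- The probability measure on the sphere `S_{p^{-r}}(y)`, obtained by restricting the
normalized Haar measure `μ_p` to the sphere and normalizing. -/
noncomputable def sphereMeasure (p : ℕ) [Fact p.Prime] (y : ℤ_[p]) (r : ℕ) : Measure ℤ_[p] :=
  (padicHaar p (padicSphere p y r))⁻¹ • (padicHaar p).restrict (padicSphere p y r)

/-- `f` is ergodic on the sphere `S_{p^{-r}}(y)`: it maps the sphere into itself, preserves
the normalized restriction of the Haar measure to the sphere, and every invariant
measurable subset of the sphere has normalized measure `0` or `1`. -/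
def ErgodicOnSphere (p : ℕ) [Fact p.Prime] (f : ℤ_[p] → ℤ_[p]) (y : ℤ_[p]) (r : ℕ) : Prop :=
  Set.MapsTo f (padicSphere p y r) (padicSphere p y r) ∧
  (∀ A : Set ℤ_[p], MeasurableSet A →
      sphereMeasure p y r (f ⁻¹' A) = sphereMeasure p y r A) ∧
  (∀ A : Set ℤ_[p], MeasurableSet A → A ⊆ padicSphere p y r →
      f ⁻¹' A ∩ padicSphere p y r = A →
      sphereMeasure p y r A = 0 ∨ sphereMeasure p y r A = 1)

/-- `d ∈ ℤ_p` is primitive modulo `p²`: its image in `ℤ/p²ℤ` generates the whole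
group of units `(ℤ/p²ℤ)ˣ`. -/
def PrimitiveModSq (p : ℕ) [Fact p.Prime] (d : ℤ_[p]) : Prop :=
  ∃ u : (ZMod (p ^ 2))ˣ, (u : ZMod (p ^ 2)) = PadicInt.toZModPow 2 d ∧
    ∀ v : (ZMod (p ^ 2))ˣ, v ∈ Subgroup.zpowers u

open scoped ENNReal

/-! Write `π_k : ℤ_p → ℤ/p^kℤ` for reduction. Compatibility says `π_k ∘ f = f̄_k ∘ π_k`, so `f⁻¹`
maps the cylinder `π_k⁻¹ S` to `π_k⁻¹ (f̄_k⁻¹ S)`; by translation invariance every fibre of `π_k` has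
Haar measure `p⁻ᵏ`, and a cylinder is null only when `S = ∅`.

If `f` is ergodic, the forward orbit `O` of a residue satisfies `O ⊆ f̄_k⁻¹ O`, and measure
preservation upgrades this to equality; then `π_k⁻¹ O` is an invariant set of positive measure, hence
of full measure, so `O` is everything.

Conversely, if every `f̄_k` is a single cycle, it is a bijection, so `f` preserves the measure of
each fibre, and fibres form a generating π-system. The same cycle argument shows that any `f`-invariant
finite measure gives equal mass to all fibres of level `k`, so it is a multiple of `μ_p` (unique
ergodicity). Applied to `μ_p` restricted to an invariant set `A`, this gives `μ_p(A) = μ_p(A)²`. -/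

namespace PadicInt

variable {p : ℕ} [Fact p.Prime]

theorem toZModPow_eq_toZModPow_iff {k : ℕ} {x y : ℤ_[p]} :
    toZModPow k x = toZModPow k y ↔ ‖x - y‖ ≤ (p : ℝ) ^ (-k : ℤ) := by
  rw [norm_le_pow_iff_mem_span_pow, ← ker_toZModPow, RingHom.mem_ker, map_sub, sub_eq_zero]

@[simp]
theorem toZModPow_natCast_val {k : ℕ} (a : ZMod (p ^ k)) : toZModPow k (a.val : ℤ_[p]) = a := by
  rw [map_natCast, ZMod.natCast_val, ZMod.cast_id]

theorem preimage_toZModPow_singleton (k : ℕ) (x : ℤ_[p]) :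
    toZModPow k ⁻¹' {toZModPow k x} = Metric.closedBall x ((p : ℝ) ^ (-k : ℤ)) := by
  ext y
  simp [toZModPow_eq_toZModPow_iff, dist_eq_norm]

theorem isOpen_preimage_toZModPow (k : ℕ) (s : Set (ZMod (p ^ k))) :
    IsOpen (toZModPow k ⁻¹' s) := by
  refine isOpen_iff_mem_nhds.2 fun x hx => ?_
  have hsub : toZModPow k ⁻¹' {toZModPow k x} ⊆ toZModPow k ⁻¹' s := by
    simpa using hx
  refine Filter.mem_of_superset ?_ hsub
  have hr : (0 : ℝ) < (p : ℝ) ^ (-k : ℤ) := zpow_pos (Nat.cast_pos.2 (Fact.out : p.Prime).pos) _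
  rw [preimage_toZModPow_singleton]
  exact (IsUltrametricDist.isOpen_closedBall x hr.ne').mem_nhds
    (Metric.mem_closedBall_self hr.le)

theorem measurableSet_preimage_toZModPow (k : ℕ) (s : Set (ZMod (p ^ k))) :
    MeasurableSet (toZModPow k ⁻¹' s) :=
  (isOpen_preimage_toZModPow k s).measurableSet

def cylinders (p : ℕ) [Fact p.Prime] : Set (Set ℤ_[p]) :=
  {s | ∃ (k : ℕ) (a : ZMod (p ^ k)), s = toZModPow k ⁻¹' {a}}

theorem isTopologicalBasis_cylinders :
    TopologicalSpace.IsTopologicalBasis (cylinders p) := by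
  refine TopologicalSpace.isTopologicalBasis_of_isOpen_of_nhds ?_ fun x U hx hU => ?_
  · rintro _ ⟨k, a, rfl⟩
    exact isOpen_preimage_toZModPow k _
  · have hp : (1 : ℝ) < p := Nat.one_lt_cast.2 (Fact.out : p.Prime).one_lt
    obtain ⟨k, -, hk⟩ := (Metric.nhds_basis_closedBall_pow (inv_pos.2 (zero_lt_one.trans hp))
      (inv_lt_one_of_one_lt₀ hp)).mem_iff.1 (hU.mem_nhds hx)
    refine ⟨_, ⟨k, toZModPow k x, rfl⟩, rfl, ?_⟩
    rwa [preimage_toZModPow_singleton, zpow_neg, zpow_natCast, ← inv_pow]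

theorem isPiSystem_cylinders : IsPiSystem (cylinders p) := by
  suffices ∀ k l (hkl : k ≤ l) (a : ZMod (p ^ k)) (b : ZMod (p ^ l)),
      (toZModPow k ⁻¹' {a} ∩ toZModPow l ⁻¹' {b}).Nonempty →
      toZModPow k ⁻¹' {a} ∩ toZModPow l ⁻¹' {b} ∈ cylinders p by
    rintro _ ⟨k, a, rfl⟩ _ ⟨l, b, rfl⟩ hne
    rcases le_total k l with hkl | hlk
    · exact this k l hkl a b hne
    · rw [Set.inter_comm] at hne ⊢
      exact this l k hlk b a hne
  rintro k l hkl a b ⟨x, hxa, hxb⟩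
  refine ⟨l, b, Set.inter_eq_right.2 fun y hy => ?_⟩
  simp only [Set.mem_preimage, Set.mem_singleton_iff] at hxa hxb hy ⊢
  rw [← cast_toZModPow k l hkl, hy, ← hxb, cast_toZModPow k l hkl, hxa]

theorem measure_ext_of_cylinders {μ ν : Measure ℤ_[p]}
    [IsFiniteMeasure μ]
    (h : ∀ k (a : ZMod (p ^ k)), μ (toZModPow k ⁻¹' {a}) = ν (toZModPow k ⁻¹' {a})) : μ = ν := by
  refine ext_of_generate_finite _ isTopologicalBasis_cylinders.borel_eq_generateFrom
    isPiSystem_cylinders ?_ ?_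
  · rintro _ ⟨k, a, rfl⟩
    exact h k a
  · have huniv : toZModPow 0 ⁻¹' {0} = (Set.univ : Set ℤ_[p]) :=
      Set.eq_univ_of_forall fun x => (ZMod.subsingleton_iff.2 (pow_zero p)).elim _ _
    simpa only [huniv] using h 0 0

end PadicInt

namespace MeasureTheory

theorem card_mul_measure_preimage_singleton {α β : Type*} [MeasurableSpace α] [Fintype β]
    {μ : Measure α} {g : α → β} (hg : ∀ b, MeasurableSet (g ⁻¹' {b})) {c : ℝ≥0∞}
    (h : ∀ b, μ (g ⁻¹' {b}) = c) : Fintype.card β * c = μ Set.univ := by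
  classical
  rw [← Set.preimage_univ (f := g), ← Finset.coe_univ,
    ← sum_measure_preimage_singleton _ fun b _ => hg b]
  simp [h]

end MeasureTheory

open PadicInt

section Haar

variable (p : ℕ) [Fact p.Prime]

instance : (padicHaar p).IsAddHaarMeasure := by
  unfold padicHaar; infer_instance

instance : IsProbabilityMeasure (padicHaar p) :=
  ⟨Measure.addHaarMeasure_self (K₀ := ⊤)⟩

theorem padicHaar_preimage_toZModPow_singleton {k : ℕ} (a b : ZMod (p ^ k)) :
    padicHaar p (toZModPow k ⁻¹' {a}) = padicHaar p (toZModPow k ⁻¹' {b}) := by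
  have htrans : (fun x => ((b - a).val : ℤ_[p]) + x) ⁻¹' (toZModPow k ⁻¹' {b}) =
      toZModPow k ⁻¹' {a} := by
    ext x
    simp only [Set.mem_preimage, Set.mem_singleton_iff, map_add, toZModPow_natCast_val]
    constructor <;> intro h <;> linear_combination h
  rw [← htrans, measure_preimage_add]

theorem card_mul_padicHaar_preimage_toZModPow_singleton {k : ℕ} (a : ZMod (p ^ k)) :
    (p ^ k : ℕ) * padicHaar p (toZModPow k ⁻¹' {a}) = 1 := by
  have h := card_mul_measure_preimage_singleton (fun b => measurableSet_preimage_toZModPow k {b})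
    (fun b => padicHaar_preimage_toZModPow_singleton p b a)
  rwa [ZMod.card, measure_univ] at h

theorem padicHaar_preimage_toZModPow_eq_zero_iff {k : ℕ} {s : Set (ZMod (p ^ k))} :
    padicHaar p (toZModPow k ⁻¹' s) = 0 ↔ s = ∅ := by
  rw [(isOpen_preimage_toZModPow k s).measure_eq_zero_iff (padicHaar p),
    Set.preimage_eq_empty_iff, Set.range_eq_univ.2 (ZMod.ringHom_surjective _), Set.disjoint_univ]

end Haar

theorem Function.bijective_of_forall_exists_iterate_eq {α : Type*} [Finite α] {g : α → α}
    (h : ∀ x z, ∃ n, g^[n] x = z) : Function.Bijective g := by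
  refine Finite.injective_iff_bijective.1 (Finite.injective_iff_surjective.2 fun z => ?_)
  obtain ⟨n, hn⟩ := h (g z) z
  exact ⟨g^[n] z, by rwa [← Function.iterate_succ_apply' g n z, Function.iterate_succ_apply]⟩

section Compatible

variable {p : ℕ} [Fact p.Prime] {f : ℤ_[p] → ℤ_[p]}

theorem modMap_toZModPow (hf : ∀ x y, ‖f x - f y‖ ≤ ‖x - y‖) (k : ℕ) (x : ℤ_[p]) :
    modMap p f k (toZModPow k x) = toZModPow k (f x) :=
  toZModPow_eq_toZModPow_iff.2 <|
    (hf _ _).trans <| toZModPow_eq_toZModPow_iff.1 (toZModPow_natCast_val _)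

theorem preimage_preimage_toZModPow (hf : ∀ x y, ‖f x - f y‖ ≤ ‖x - y‖) (k : ℕ)
    (s : Set (ZMod (p ^ k))) :
    f ⁻¹' (toZModPow k ⁻¹' s) = toZModPow k ⁻¹' (modMap p f k ⁻¹' s) := by
  ext x
  simp [modMap_toZModPow hf]

theorem preimage_preimage_toZModPow_modMap (hf : ∀ x y, ‖f x - f y‖ ≤ ‖x - y‖) {k : ℕ}
    (hinj : Function.Injective (modMap p f k)) (b : ZMod (p ^ k)) :
    f ⁻¹' (toZModPow k ⁻¹' {modMap p f k b}) = toZModPow k ⁻¹' {b} := by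
  rw [preimage_preimage_toZModPow hf, ← Set.image_singleton, hinj.preimage_image]

theorem measurable_of_compatible (hf : ∀ x y, ‖f x - f y‖ ≤ ‖x - y‖) : Measurable f :=
  (LipschitzWith.of_dist_le_mul fun x y => by
    simpa [dist_eq_norm] using hf x y : LipschitzWith 1 f).continuous.measurable

theorem measurePreserving_padicHaar (hf : ∀ x y, ‖f x - f y‖ ≤ ‖x - y‖)
    (hbij : ∀ k, Function.Bijective (modMap p f k)) :
    MeasurePreserving f (padicHaar p) (padicHaar p) := by
  refine ⟨measurable_of_compatible hf, measure_ext_of_cylinders fun k a => ?_⟩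
  obtain ⟨b, rfl⟩ := (hbij k).2 a
  rw [Measure.map_apply (measurable_of_compatible hf) (measurableSet_preimage_toZModPow k _),
    preimage_preimage_toZModPow_modMap hf (hbij k).1, padicHaar_preimage_toZModPow_singleton]

theorem eq_smul_padicHaar_of_measurePreserving (hf : ∀ x y, ‖f x - f y‖ ≤ ‖x - y‖)
    (htr : ∀ k (x z : ZMod (p ^ k)), ∃ n, (modMap p f k)^[n] x = z)
    {ν : Measure ℤ_[p]} [IsFiniteMeasure ν] (hν : MeasurePreserving f ν ν) :
    ν = ν Set.univ • padicHaar p := by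
  refine measure_ext_of_cylinders fun k a => ?_
  have hinj := (Function.bijective_of_forall_exists_iterate_eq (htr k)).1
  have hstep (b : ZMod (p ^ k)) :
      ν (toZModPow k ⁻¹' {modMap p f k b}) = ν (toZModPow k ⁻¹' {b}) := by
    rw [← hν.measure_preimage (measurableSet_preimage_toZModPow k _).nullMeasurableSet,
      preimage_preimage_toZModPow_modMap hf hinj]
  have hconst (b : ZMod (p ^ k)) : ν (toZModPow k ⁻¹' {b}) = ν (toZModPow k ⁻¹' {a}) := by
    obtain ⟨n, rfl⟩ := htr k a b
    induction n with
    | zero => rfl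
    | succ n ih => rw [Function.iterate_succ_apply', hstep, ih]
  have hν_univ := card_mul_measure_preimage_singleton
    (fun b => measurableSet_preimage_toZModPow k {b}) hconst
  rw [ZMod.card] at hν_univ
  calc ν (toZModPow k ⁻¹' {a})
      = ν (toZModPow k ⁻¹' {a}) * ((p ^ k : ℕ) * padicHaar p (toZModPow k ⁻¹' {a})) := by
        rw [card_mul_padicHaar_preimage_toZModPow_singleton, mul_one]
    _ = ((p ^ k : ℕ) * ν (toZModPow k ⁻¹' {a})) * padicHaar p (toZModPow k ⁻¹' {a}) := by ring
    _ = (ν Set.univ • padicHaar p) (toZModPow k ⁻¹' {a}) := by rw [hν_univ]; rfl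

theorem padicHaar_eq_zero_or_one_of_preimage_eq (hf : ∀ x y, ‖f x - f y‖ ≤ ‖x - y‖)
    (htr : ∀ k (x z : ZMod (p ^ k)), ∃ n, (modMap p f k)^[n] x = z)
    {A : Set ℤ_[p]} (hA : MeasurableSet A) (hinv : f ⁻¹' A = A) :
    padicHaar p A = 0 ∨ padicHaar p A = 1 := by
  have hpres := measurePreserving_padicHaar hf fun k =>
    Function.bijective_of_forall_exists_iterate_eq (htr k)
  have hrestr : MeasurePreserving f ((padicHaar p).restrict A) ((padicHaar p).restrict A) := by
    simpa only [hinv] using hpres.restrict_preimage hA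
  have hsq := congrArg (· A) (eq_smul_padicHaar_of_measurePreserving hf htr hrestr)
  simp only [Measure.restrict_apply hA, Set.inter_self, Measure.restrict_apply_univ,
    Measure.smul_apply, smul_eq_mul] at hsq
  refine (eq_or_ne (padicHaar p A) 0).imp_right fun h0 => ?_
  refine ((ENNReal.mul_right_inj h0 (measure_ne_top _ _)).1 ?_).symm
  rw [mul_one, ← hsq]

theorem preimage_modMap_eq_of_subset (hf : ∀ x y, ‖f x - f y‖ ≤ ‖x - y‖)
    (hμ : ∀ A, MeasurableSet A → padicHaar p (f ⁻¹' A) = padicHaar p A)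
    {k : ℕ} {s : Set (ZMod (p ^ k))} (hs : s ⊆ modMap p f k ⁻¹' s) :
    modMap p f k ⁻¹' s = s := by
  have hπ := preimage_preimage_toZModPow hf k s
  refine (Set.sdiff_eq_empty.1 ?_).antisymm hs
  rw [← padicHaar_preimage_toZModPow_eq_zero_iff p, Set.preimage_sdiff, ← hπ,
    measure_sdiff (hπ ▸ Set.preimage_mono hs)
      (measurableSet_preimage_toZModPow k s).nullMeasurableSet (measure_ne_top _ _),
    hμ _ (measurableSet_preimage_toZModPow k s), tsub_self]

theorem exists_iterate_modMap_eq_of_ergodic (hf : ∀ x y, ‖f x - f y‖ ≤ ‖x - y‖)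
    (hμ : ∀ A, MeasurableSet A → padicHaar p (f ⁻¹' A) = padicHaar p A)
    (herg : ∀ A, MeasurableSet A → f ⁻¹' A = A → padicHaar p A = 0 ∨ padicHaar p A = 1)
    (k : ℕ) (x z : ZMod (p ^ k)) : ∃ n, (modMap p f k)^[n] x = z := by
  set O := Set.range fun n => (modMap p f k)^[n] x
  have hO : modMap p f k ⁻¹' O = O := preimage_modMap_eq_of_subset hf hμ <| by
    rintro _ ⟨n, rfl⟩
    exact ⟨n + 1, Function.iterate_succ_apply' _ n x⟩
  have hinv : f ⁻¹' (toZModPow k ⁻¹' O) = toZModPow k ⁻¹' O := by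
    rw [preimage_preimage_toZModPow hf, hO]
  have hne : padicHaar p (toZModPow k ⁻¹' O) ≠ 0 := by
    rw [Ne, padicHaar_preimage_toZModPow_eq_zero_iff]
    exact Set.nonempty_iff_ne_empty.1 ⟨x, 0, rfl⟩
  have hcompl : padicHaar p (toZModPow k ⁻¹' Oᶜ) = 0 := by
    rw [Set.preimage_compl, prob_compl_eq_zero_iff (measurableSet_preimage_toZModPow k O)]
    exact (herg _ (measurableSet_preimage_toZModPow k O) hinv).resolve_left hne
  rw [padicHaar_preimage_toZModPow_eq_zero_iff, Set.compl_empty_iff] at hcompl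
  have hz : z ∈ O := hcompl ▸ Set.mem_univ z
  exact hz

end Compatible

/-- A compatible (1-Lipschitz) function `f : ℤ_p → ℤ_p` is ergodic with respect to the
normalized Haar measure `μ_p` if and only if it is transitive modulo `p^k` (the induced
map on `ℤ/p^kℤ` is a single cycle permutation, equivalently every point reaches every
point under iteration) for every `k ≥ 1`. -/
theorem ergodic_iff_transitive_mod (p : ℕ) [Fact p.Prime]
    (f : ℤ_[p] → ℤ_[p]) (hf : ∀ x y : ℤ_[p], ‖f x - f y‖ ≤ ‖x - y‖) :
    ((∀ A : Set ℤ_[p], MeasurableSet A → padicHaar p (f ⁻¹' A) = padicHaar p A) ∧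
      (∀ A : Set ℤ_[p], MeasurableSet A → f ⁻¹' A = A →
        padicHaar p A = 0 ∨ padicHaar p A = 1)) ↔
      ∀ k : ℕ, 1 ≤ k → ∀ x z : ZMod (p ^ k), ∃ n : ℕ, (modMap p f k)^[n] x = z := by
  refine ⟨fun ⟨hμ, herg⟩ k _ => exists_iterate_modMap_eq_of_ergodic hf hμ herg k, fun htr => ?_⟩
  have htr₀ : ∀ k (x z : ZMod (p ^ k)), ∃ n, (modMap p f k)^[n] x = z := by
    intro k
    rcases k.eq_zero_or_pos with rfl | hk
    · exact fun x z => ⟨0, (ZMod.subsingleton_iff.2 (pow_zero p)).elim _ _⟩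
    · exact htr k hk
  refine ⟨fun A hA => ?_, fun A hA => padicHaar_eq_zero_or_one_of_preimage_eq hf htr₀ hA⟩
  exact (measurePreserving_padicHaar hf fun k =>
    Function.bijective_of_forall_exists_iterate_eq (htr₀ k)).measure_preimage hA.nullMeasurableSet
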